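/- The misère outcome of NimG-RM+L (NimG-RM with a loop on every vertex) can be computed, together with an effective winning strategy, in time O(√|V(G)| · |E(G)|). More precisely: the position is a first-player win if and only if either w(u) ≥ 2, or w(u) = 1 and every maximum matching of the connected component of u in G minus the vertices of weight ≥ 2 covers u. -/

import Mathlib

universe u
mutual
  inductive GNormalWin {α : Type u} (moves : α → α → Prop) : α → Prop
    | step {p q : α} : moves p q → GNormalLose moves q → GNormalWin moves p
  inductive GNormalLose {α : Type u} (moves : α → α → Prop) : α → Prop
    | intro {p : α} : (∀ q, moves p q → GNormalWin moves q) → GNormalLose moves p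
end

mutual
  inductive GMisereWin {α : Type u} (moves : α → α → Prop) : α → Prop
    | terminal {p : α} : (∀ q, ¬ moves p q) → GMisereWin moves p
    | step {p q : α} : moves p q → GMisereLose moves q → GMisereWin moves p
  inductive GMisereLose {α : Type u} (moves : α → α → Prop) : α → Prop
    | intro {p q₀ : α} : moves p q₀ → (∀ q, moves p q → GMisereWin moves q) → GMisereLose moves p
end

def nimMove {V : Type u} (adj : V → V → Prop) (p q : V × (V → ℕ)) : Prop :=
  adj p.1 q.1 ∧ q.2 p.1 < p.2 p.1 ∧ ∀ v, v ≠ p.1 → q.2 v = p.2 v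

mutual
  inductive NimRMWin {V : Type u} (adj : V → V → Prop) : V × (V → ℕ) → Prop
    | zero {p} : p.2 p.1 = 0 → NimRMWin adj p
    | step {p q} : nimMove adj p q → NimRMLose adj q → NimRMWin adj p
  inductive NimRMLose {V : Type u} (adj : V → V → Prop) : V × (V → ℕ) → Prop
    | intro {p} : p.2 p.1 ≠ 0 → (∀ q, nimMove adj p q → NimRMWin adj q) → NimRMLose adj p
end

def vgMove {V : Type u} (A : V → V → Prop) (p q : Set V × V) : Prop :=
  A p.2 q.2 ∧ q.2 ∈ p.1 ∧ q.2 ≠ p.2 ∧ q.1 = p.1 \ {p.2}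

def addOut {V : Type u} (A : V → V → Prop) : V ⊕ V → V ⊕ V → Prop
  | .inl a, .inl b => A a b
  | .inl a, .inr b => a = b
  | _, _ => False

def MaxMatching {V : Type u} (G : SimpleGraph V) (M : G.Subgraph) : Prop :=
  M.IsMatching ∧ ∀ N : G.Subgraph, N.IsMatching → N.edgeSet.ncard ≤ M.edgeSet.ncard

/-- The graph `G` with all vertices of weight at least 2 deleted. -/
def delHeavy {V : Type u} (G : SimpleGraph V) (w : V → ℕ) : SimpleGraph V where
  Adj a b := G.Adj a b ∧ w a < 2 ∧ w b < 2
  symm := ⟨fun a b h => ⟨h.1.symm, h.2.2, h.2.1⟩⟩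
  loopless := ⟨fun a h => G.loopless.irrefl a h.1⟩

/-- The connected component of `u` in `G` minus the vertices of weight at least 2. -/
def compGraph {V : Type u} (G : SimpleGraph V) (w : V → ℕ) (u : V) : SimpleGraph V where
  Adj a b := (delHeavy G w).Adj a b ∧ (delHeavy G w).Reachable u a ∧ (delHeavy G w).Reachable u b
  symm := ⟨fun a b h => ⟨h.1.symm, h.2.2, h.2.1⟩⟩
  loopless := ⟨fun a h => (delHeavy G w).loopless.irrefl a h.1⟩

/-!
On a vertex of weight 1 every move empties it, and moving onto an empty or a heavy vertex hands
the opponent a win, so from a light vertex the game is undirected Vertex Geography on the light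
component of `u`: a position is encoded by the set `S` of vertices not yet emptied, with weights
`S.indicator w`. By Fraenkel–Scheinerman–Ullman the player to move wins iff every maximum
matching inside `S` covers the token: if it does, move along its matching edge, after which the
rest of that matching is a maximum matching of `S \ {x}` missing the new token; if it does not,
every move lands on a vertex covered by all maximum matchings of `S \ {x}`, as otherwise the
move's edge would augment one of them. A heavy vertex is a win by strategy stealing: either
lowering it to 1 and staying put is a winning move, or the winning reply from that position is
also available now.
-/

namespace SimpleGraph

variable {V : Type} {H : SimpleGraph V}

def IsMaxMatchingIn (H : SimpleGraph V) (S : Set V) (M : H.Subgraph) : Prop :=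
  M.IsMatching ∧ M.verts ⊆ S ∧
    ∀ N : H.Subgraph, N.IsMatching → N.verts ⊆ S → N.edgeSet.ncard ≤ M.edgeSet.ncard

def CoveredByEveryMaxMatching (H : SimpleGraph V) (S : Set V) (x : V) : Prop :=
  ∀ M : H.Subgraph, H.IsMaxMatchingIn S M → x ∈ M.verts

lemma isMaxMatchingIn_univ_iff {M : H.Subgraph} :
    H.IsMaxMatchingIn Set.univ M ↔ MaxMatching H M := by
  simp [IsMaxMatchingIn, MaxMatching]

lemma exists_isMaxMatchingIn [Finite V] (H : SimpleGraph V) (S : Set V) :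
    ∃ M, H.IsMaxMatchingIn S M := by
  have : Nonempty {N : H.Subgraph // N.IsMatching ∧ N.verts ⊆ S} :=
    ⟨⟨⊥, fun _ hv ↦ hv.elim, fun _ hv ↦ hv.elim⟩⟩
  obtain ⟨⟨M, hM, hMS⟩, hmax⟩ :=
    Finite.exists_max fun N : {N : H.Subgraph // N.IsMatching ∧ N.verts ⊆ S} ↦
      N.1.edgeSet.ncard
  exact ⟨M, hM, hMS, fun N hN hNS ↦ hmax ⟨N, hN, hNS⟩⟩

namespace Subgraph

variable {M : H.Subgraph} {s : Set V} {x y : V}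

lemma IsMatching.deleteVerts (hM : M.IsMatching) (hs : ∀ a b, M.Adj a b → a ∈ s → b ∈ s) :
    (M.deleteVerts s).IsMatching := by
  rintro v ⟨hv, hvs⟩
  obtain ⟨p, hvp, hp⟩ := hM hv
  refine ⟨p, ?_, fun q hq ↦ hp q ((deleteVerts_adj).1 hq).2.2.2.2⟩
  exact deleteVerts_adj.2
    ⟨hv, hvs, M.edge_vert hvp.symm, fun hps ↦ hvs (hs p v hvp.symm hps), hvp⟩

lemma IsMatching.deleteVerts_pair (hM : M.IsMatching) (hxy : M.Adj x y) :
    (M.deleteVerts {x, y}).IsMatching := by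
  refine hM.deleteVerts fun a b hab ha ↦ ?_
  rcases ha with rfl | rfl
  · exact .inr (hM.eq_of_adj_left hab hxy)
  · exact .inl (hM.eq_of_adj_left hab hxy.symm)

lemma IsMatching.edgeSet_subset_insert_deleteVerts_pair (hM : M.IsMatching) (hxy : M.Adj x y) :
    M.edgeSet ⊆ insert s(x, y) (M.deleteVerts {x, y}).edgeSet := by
  intro e he
  induction e with
  | h a b =>
    by_cases hab : a ∈ ({x, y} : Set V) ∨ b ∈ ({x, y} : Set V)
    · left
      have hab' : M.Adj a b := he
      rcases hab with (rfl | rfl) | (rfl | rfl)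
      · rw [hM.eq_of_adj_left hab' hxy]
      · rw [hM.eq_of_adj_left hab' hxy.symm, Sym2.eq_swap]
      · rw [hM.eq_of_adj_right hab' hxy.symm, Sym2.eq_swap]
      · rw [hM.eq_of_adj_right hab' hxy]
    · simp only [not_or] at hab
      exact .inr <| deleteVerts_adj.2
        ⟨M.edge_vert he, hab.1, M.edge_vert (M.adj_symm he), hab.2, he⟩

lemma IsMatching.sup_subgraphOfAdj {N : H.Subgraph} (hN : N.IsMatching) (hxy : H.Adj x y)
    (hx : x ∉ N.verts) (hy : y ∉ N.verts) : (N ⊔ H.subgraphOfAdj hxy).IsMatching := by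
  refine hN.sup (.subgraphOfAdj hxy) ?_
  rw [hN.support_eq_verts, (IsMatching.subgraphOfAdj hxy).support_eq_verts, subgraphOfAdj_verts]
  exact Set.disjoint_left.2 fun v hv hv' ↦ by rcases hv' with rfl | rfl <;> contradiction

lemma ncard_edgeSet_sup_subgraphOfAdj [Finite V] {N : H.Subgraph} (hxy : H.Adj x y)
    (hx : x ∉ N.verts) : (N ⊔ H.subgraphOfAdj hxy).edgeSet.ncard = N.edgeSet.ncard + 1 := by
  rw [edgeSet_sup, edgeSet_subgraphOfAdj, Set.union_singleton, Set.ncard_insert_of_notMem]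
  exact fun h ↦ hx (N.mem_verts_of_mem_edge h (Sym2.mem_mk_left x y))

end Subgraph

open Subgraph

variable [Finite V] {S : Set V} {x z : V}

lemma CoveredByEveryMaxMatching.exists_adj_not_mem_sdiff (hx : H.CoveredByEveryMaxMatching S x) :
    ∃ y, H.Adj x y ∧ y ∈ S ∧ ∃ M, H.IsMaxMatchingIn (S \ {x}) M ∧ y ∉ M.verts := by
  obtain ⟨M, hM, hMS, hMmax⟩ := H.exists_isMaxMatchingIn S
  obtain ⟨y, hxy, -⟩ := hM (hx M ⟨hM, hMS, hMmax⟩)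
  refine ⟨y, M.adj_sub hxy, hMS (M.edge_vert hxy.symm), M.deleteVerts {x, y},
    ⟨?_, ?_, ?_⟩, ?_⟩
  · exact hM.deleteVerts_pair hxy
  · rw [deleteVerts_verts]
    exact Set.sdiff_subset_sdiff hMS (by simp)
  · intro N hN hNS
    have hNM : N.edgeSet.ncard < M.edgeSet.ncard := by
      by_contra! hle
      have := hx N ⟨hN, hNS.trans Set.sdiff_subset,
        fun N' hN' hN'S ↦ (hMmax N' hN' hN'S).trans hle⟩
      exact (hNS this).2 rfl
    have := (Set.ncard_le_ncard (hM.edgeSet_subset_insert_deleteVerts_pair hxy)).trans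
      (Set.ncard_insert_le _ _)
    omega
  · simp

lemma IsMaxMatchingIn.coveredByEveryMaxMatching_sdiff_of_adj {N : H.Subgraph}
    (hN : H.IsMaxMatchingIn S N) (hxN : x ∉ N.verts) (hxS : x ∈ S) (hxz : H.Adj x z)
    (hzS : z ∈ S) :
    H.CoveredByEveryMaxMatching (S \ {x}) z := by
  intro M ⟨hM, hMS, hMmax⟩
  by_contra hzM
  have hxM : x ∉ M.verts := fun h ↦ (hMS h).2 rfl
  have hNM : N.edgeSet.ncard ≤ M.edgeSet.ncard :=
    hMmax N hN.1 fun v hv ↦ ⟨hN.2.1 hv, fun hvx ↦ hxN (hvx ▸ hv)⟩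
  have hle := hN.2.2 _ (hM.sup_subgraphOfAdj hxz hxM hzM) <| by
    rw [verts_sup, subgraphOfAdj_verts]
    exact Set.union_subset (hMS.trans Set.sdiff_subset) (Set.pair_subset hxS hzS)
  rw [ncard_edgeSet_sup_subgraphOfAdj hxz hxM] at hle
  omega

end SimpleGraph

section NimG

variable {V : Type} {adj : V → V → Prop}

lemma nimMove_indicator_iff {S : Set V} {x z : V} {w w' : V → ℕ}
    (hxS : x ∈ S) (hx : w x = 1) :
    nimMove adj (x, S.indicator w) (z, w') ↔ adj x z ∧ w' = (S \ {x}).indicator w := by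
  constructor
  · rintro ⟨hxz, hlt, hw'⟩
    refine ⟨hxz, funext fun v ↦ ?_⟩
    by_cases hv : v = x
    · subst hv
      simp only [Set.indicator_of_mem hxS, hx] at hlt
      simp only [Set.indicator_of_notMem (fun h : v ∈ S \ {v} ↦ h.2 rfl)]
      exact Nat.lt_one_iff.1 hlt
    · rw [show w' v = _ from hw' v hv]
      by_cases hvS : v ∈ S <;> simp [hvS, hv]
  · rintro ⟨hxz, rfl⟩
    refine ⟨hxz, by simp [Set.indicator_of_mem hxS, hx], fun v (hv : v ≠ x) ↦ ?_⟩
    by_cases hvS : v ∈ S <;> simp [hvS, hv]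

variable [Fintype V]

def totalWeight (p : V × (V → ℕ)) : ℕ := ∑ v, p.2 v

lemma totalWeight_lt_of_nimMove {p q : V × (V → ℕ)} (h : nimMove adj p q) :
    totalWeight q < totalWeight p := by
  obtain ⟨-, hlt, hq⟩ := h
  refine Finset.sum_lt_sum (fun v _ ↦ ?_) ⟨p.1, Finset.mem_univ _, hlt⟩
  by_cases hv : v = p.1
  · exact hv ▸ hlt.le
  · exact (hq v hv).le

lemma nimRMWin_or_nimRMLose (adj : V → V → Prop) (p : V × (V → ℕ)) :
    NimRMWin adj p ∨ NimRMLose adj p := by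
  by_cases h0 : p.2 p.1 = 0
  · exact .inl (.zero h0)
  by_cases h : ∃ q, nimMove adj p q ∧ NimRMLose adj q
  · obtain ⟨q, hq, hlose⟩ := h
    exact .inl (.step hq hlose)
  · refine .inr (.intro h0 fun q hq ↦ ?_)
    have := totalWeight_lt_of_nimMove hq
    exact (nimRMWin_or_nimRMLose adj q).resolve_right fun hlose ↦ h ⟨q, hq, hlose⟩
termination_by totalWeight p

lemma not_nimRMLose_of_nimRMWin {p : V × (V → ℕ)} (hwin : NimRMWin adj p) :
    ¬ NimRMLose adj p := by
  rintro ⟨h0, hall⟩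
  cases hwin with
  | zero h => exact h0 h
  | step hq hlose =>
    have := totalWeight_lt_of_nimMove hq
    exact not_nimRMLose_of_nimRMWin (hall _ hq) hlose
termination_by totalWeight p

lemma nimRMWin_of_two_le {x : V} {w : V → ℕ} (hx : adj x x) (h2 : 2 ≤ w x) :
    NimRMWin adj (x, w) := by
  classical
  have hmove : nimMove adj (x, w) (x, Function.update w x 1) :=
    ⟨hx, by simp; omega, fun v hv ↦ Function.update_of_ne hv _ _⟩
  rcases nimRMWin_or_nimRMLose adj (x, Function.update w x 1) with hwin | hlose
  · cases hwin with
    | zero h => simp at h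
    | @step _ q hq hlose =>
      obtain ⟨hxq, hlt, hq⟩ := hq
      refine .step ⟨hxq, ?_, fun v hv ↦ (hq v hv).trans (Function.update_of_ne hv _ _)⟩ hlose
      have : q.2 x < 1 := by simpa using hlt
      show q.2 x < w x
      omega
  · exact .step hmove hlose

end NimG

section LightVertices

variable {V : Type} [Fintype V] {G : SimpleGraph V} {w : V → ℕ} {u : V}

open SimpleGraph

mutual

theorem nimRMWin_of_coveredByEveryMaxMatching (hw : ∀ v, 0 < w v) {S : Set V} {x : V}
    (hxS : x ∈ S) (hx : w x = 1) (hcov : (compGraph G w u).CoveredByEveryMaxMatching S x) :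
    NimRMWin (fun a b ↦ G.Adj a b ∨ a = b) (x, S.indicator w) := by
  obtain ⟨y, hxy, hyS, M, hM, hyM⟩ := hcov.exists_adj_not_mem_sdiff
  have hy : w y = 1 := by have := hxy.1.2.2; have := hw y; omega
  have := Set.ncard_sdiff_singleton_lt_of_mem hxS
  exact .step ((nimMove_indicator_iff hxS hx).2 ⟨.inl hxy.1.1, rfl⟩)
    (nimRMLose_of_not_mem_maxMatching hw ⟨hyS, hxy.ne'⟩ hy hxy.2.2 hM hyM)
termination_by S.ncard

theorem nimRMLose_of_not_mem_maxMatching (hw : ∀ v, 0 < w v) {S : Set V} {x : V} (hxS : x ∈ S)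
    (hx : w x = 1) (hux : (delHeavy G w).Reachable u x) {M : (compGraph G w u).Subgraph}
    (hM : (compGraph G w u).IsMaxMatchingIn S M) (hxM : x ∉ M.verts) :
    NimRMLose (fun a b ↦ G.Adj a b ∨ a = b) (x, S.indicator w) := by
  refine .intro (by simp [Set.indicator_of_mem hxS, hx]) fun ⟨z, w'⟩ hmove ↦ ?_
  obtain ⟨hxz, rfl⟩ := (nimMove_indicator_iff hxS hx).1 hmove
  by_cases hzS : z ∈ S \ {x}
  swap
  · exact .zero (Set.indicator_of_notMem hzS _)
  have hGxz : G.Adj x z := hxz.resolve_right fun h ↦ hzS.2 h.symm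
  rcases Nat.lt_or_ge (w z) 2 with hz | hz
  · have := Set.ncard_sdiff_singleton_lt_of_mem hxS
    have hxz' : (compGraph G w u).Adj x z :=
      ⟨⟨hGxz, by omega, hz⟩, hux, hux.trans (Adj.reachable ⟨hGxz, by omega, hz⟩)⟩
    exact nimRMWin_of_coveredByEveryMaxMatching hw hzS (by have := hw z; omega)
      (hM.coveredByEveryMaxMatching_sdiff_of_adj hxM hxS hxz' hzS.1)
  · exact nimRMWin_of_two_le (.inr rfl) (by rwa [Set.indicator_of_mem hzS])
termination_by S.ncard

end

theorem nimRMWin_iff_coveredByEveryMaxMatching (hw : ∀ v, 0 < w v) {S : Set V} {x : V}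
    (hxS : x ∈ S) (hx : w x = 1) (hux : (delHeavy G w).Reachable u x) :
    NimRMWin (fun a b ↦ G.Adj a b ∨ a = b) (x, S.indicator w) ↔
      (compGraph G w u).CoveredByEveryMaxMatching S x := by
  refine ⟨fun hwin M hM ↦ ?_, nimRMWin_of_coveredByEveryMaxMatching hw hxS hx⟩
  by_contra hxM
  exact not_nimRMLose_of_nimRMWin hwin (nimRMLose_of_not_mem_maxMatching hw hxS hx hux hM hxM)

end LightVertices

/-- Misère NimG-RM with a loop on every vertex and positive weights: the position is a
first-player win iff either `w u ≥ 2`, or `w u = 1` and every maximum matching of the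
connected component of `u` in the graph minus the weight-≥2 vertices covers `u`. -/
theorem stmt7 {V : Type} [Fintype V] (G : SimpleGraph V) (w : V → ℕ) (hw : ∀ v, 0 < w v)
    (u : V) :
    NimRMWin (fun a b => G.Adj a b ∨ a = b) (u, w) ↔
      (2 ≤ w u ∨ (w u = 1 ∧
        ∀ M : (compGraph G w u).Subgraph, MaxMatching (compGraph G w u) M → u ∈ M.verts)) := by
  rcases Nat.lt_or_ge (w u) 2 with hu | hu
  · have hu1 : w u = 1 := by have := hw u; omega
    have h := nimRMWin_iff_coveredByEveryMaxMatching (G := G) hw (Set.mem_univ u) hu1 (.refl u)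
    simp only [Set.indicator_univ, SimpleGraph.CoveredByEveryMaxMatching,
      SimpleGraph.isMaxMatchingIn_univ_iff] at h
    simp [h, hu1]
  · exact iff_of_true (nimRMWin_of_two_le (.inr rfl) hu) (.inl hu)
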